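/- For β > 0 and N ∈ ℕ, suppose μ₀ < 0 satisfies N = ∑_{p ∈ 2πℤ³} (e^{β(‖p‖² − μ₀)} − 1)^{−1}, and assume β ≥ c N^{−2/3} for some c > 0. Then there exists a constant C (depending only on c) such that −βμ₀ ≤ C. -/

import Mathlib

open Real

/-- The Euclidean norm of the point `2πp ∈ 2πℤ³` for `p ∈ ℤ³`. -/
noncomputable def lnorm3 (p : Fin 3 → ℤ) : ℝ :=
  Real.sqrt (∑ i, ((2 * Real.pi) * (p i : ℝ)) ^ 2)

lemma nat_gauss_summable {a : ℝ} (ha : 0 < a) :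
    Summable (fun n : ℕ => Real.exp (-a * (n:ℝ)^2)) := by
  refine Summable.of_nonneg_of_le (fun n => (Real.exp_pos _).le) (fun n => ?_)
    (summable_geometric_of_lt_one (Real.exp_nonneg (-a)) (Real.exp_lt_one_iff.mpr (by linarith)))
  rw [← Real.exp_nat_mul]
  apply Real.exp_le_exp.mpr
  have h : (n:ℝ) ≤ (n:ℝ)^2 := by exact_mod_cast Nat.le_self_pow two_ne_zero n
  nlinarith

lemma nat_gauss_tsum_le {a : ℝ} (ha : 0 < a) :
    (∑' n : ℕ, Real.exp (-a * (n:ℝ)^2)) ≤ (1 - Real.exp (-a))⁻¹ := by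
  have h := tsum_geometric_of_lt_one (Real.exp_nonneg (-a)) (Real.exp_lt_one_iff.mpr (by linarith : -a < 0))
  rw [← h]
  refine Summable.tsum_le_tsum (fun n => ?_) (nat_gauss_summable ha)
    (summable_geometric_of_lt_one (Real.exp_nonneg (-a)) (Real.exp_lt_one_iff.mpr (by linarith)))
  rw [← Real.exp_nat_mul]
  apply Real.exp_le_exp.mpr
  have h : (n:ℝ) ≤ (n:ℝ)^2 := by exact_mod_cast Nat.le_self_pow two_ne_zero n
  nlinarith

lemma int_gauss_summable {a : ℝ} (ha : 0 < a) :
    Summable (fun n : ℤ => Real.exp (-a * (n:ℝ)^2)) := by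
  apply Summable.of_nat_of_neg
  · simpa using nat_gauss_summable ha
  · simpa using nat_gauss_summable ha

lemma int_gauss_mono {a b : ℝ} (ha : 0 < a) (hab : a ≤ b) :
    (∑' n : ℤ, Real.exp (-b * (n:ℝ)^2)) ≤ ∑' n : ℤ, Real.exp (-a * (n:ℝ)^2) := by
  refine Summable.tsum_le_tsum (fun n => Real.exp_le_exp.mpr ?_) (int_gauss_summable (lt_of_lt_of_le ha hab)) (int_gauss_summable ha)
  nlinarith [sq_nonneg ((n:ℝ))]

set_option maxHeartbeats 1000000 in
lemma int_gauss_tsum_le {a : ℝ} (ha : 0 < a) :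
    (∑' n : ℤ, Real.exp (-a * (n:ℝ)^2)) ≤ 2 + 2/a := by
  have hs1 : Summable (fun n : ℕ => Real.exp (-a * ((n:ℤ):ℝ)^2)) := by
    simpa using nat_gauss_summable ha
  have hs2 : Summable (fun n : ℕ => Real.exp (-a * (((-((n:ℤ)+1)):ℤ):ℝ)^2)) := by
    have hinj : Function.Injective (fun n : ℕ => (-((n:ℤ)+1) : ℤ)) := by
      intro x y h; simp only at h; omega
    exact (int_gauss_summable ha).comp_injective hinj
  have heq := tsum_of_nat_of_neg_add_one (f := fun n : ℤ => Real.exp (-a * (n:ℝ)^2)) hs1 hs2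
  rw [heq]
  have key : (1 - Real.exp (-a))⁻¹ ≤ 1 + 1/a := by
    have h1 : Real.exp (-a) ≤ (1+a)⁻¹ := by
      rw [Real.exp_neg]
      refine inv_anti₀ (by linarith) ?_
      linarith [Real.add_one_le_exp a]
    have h2 : a/(1+a) ≤ 1 - Real.exp (-a) := by
      have h3 : (1:ℝ) - (1+a)⁻¹ = a/(1+a) := by field_simp; ring
      linarith [h3 ▸ sub_le_sub_left h1 1]
    have h3 : (0:ℝ) < a/(1+a) := by positivity
    calc (1 - Real.exp (-a))⁻¹ ≤ (a/(1+a))⁻¹ := inv_anti₀ h3 h2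
      _ = 1 + 1/a := by field_simp; ring
  have b1 : (∑' n : ℕ, Real.exp (-a * ((n:ℤ):ℝ)^2)) ≤ (1 - Real.exp (-a))⁻¹ := by
    simpa using nat_gauss_tsum_le ha
  have b2 : (∑' n : ℕ, Real.exp (-a * (((-((n:ℤ)+1)):ℤ):ℝ)^2)) ≤ (1 - Real.exp (-a))⁻¹ := by
    refine le_trans (Summable.tsum_le_tsum (fun n => Real.exp_le_exp.mpr ?_) hs2 (nat_gauss_summable ha)) (nat_gauss_tsum_le ha)
    push_cast
    nlinarith [Nat.cast_nonneg (α := ℝ) n, mul_nonneg ha.le (Nat.cast_nonneg (α := ℝ) n)]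
  calc _ ≤ (1 - Real.exp (-a))⁻¹ + (1 - Real.exp (-a))⁻¹ := add_le_add b1 b2
    _ ≤ (1 + 1/a) + (1 + 1/a) := add_le_add key key
    _ = 2 + 2/a := by ring

lemma theta_beta {β : ℝ} (hβ : 0 < β) :
    (∑' n : ℤ, Real.exp (-(4*π^2*β) * (n:ℝ)^2)) ≤ 10 * max 1 (β ^ (-(1:ℝ)/2)) := by
  have hpi := Real.pi_gt_three
  have ha : 0 < 4*π^2*β := by positivity
  have hmax : (1:ℝ) ≤ max 1 (β ^ (-(1:ℝ)/2)) := le_max_left _ _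
  rcases le_or_gt 1 β with h1 | h1
  · -- β ≥ 1 : a ≥ 1
    have ha1 : (1:ℝ) ≤ 4*π^2*β := by nlinarith
    have : (∑' n : ℤ, Real.exp (-(4*π^2*β) * (n:ℝ)^2)) ≤ 2 + 2/(4*π^2*β) := int_gauss_tsum_le ha
    have h2 : 2/(4*π^2*β) ≤ 2 := by
      rw [div_le_iff₀ ha]; nlinarith
    nlinarith
  · -- β < 1 : Poisson
    have h4πβ : 0 < 4*π*β := by positivity
    have hP := Real.tsum_exp_neg_mul_int_sq (a := 4*π*β) h4πβ
    have hL : (∑' n : ℤ, Real.exp (-(4*π^2*β) * (n:ℝ)^2))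
        = ∑' n : ℤ, Real.exp (-π * (4*π*β) * (n:ℝ)^2) := by
      refine tsum_congr (fun n => ?_); congr 1; ring
    have hR : (∑' n : ℤ, Real.exp (-π / (4*π*β) * (n:ℝ)^2))
        = ∑' n : ℤ, Real.exp (-(1/(4*β)) * (n:ℝ)^2) := by
      have hpne : (π:ℝ) ≠ 0 := Real.pi_ne_zero
      refine tsum_congr (fun n => ?_); congr 1
      field_simp
    have hdual : (∑' n : ℤ, Real.exp (-(1/(4*β)) * (n:ℝ)^2)) ≤ 10 := by
      have hm : (∑' n : ℤ, Real.exp (-(1/(4*β)) * (n:ℝ)^2))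
          ≤ ∑' n : ℤ, Real.exp (-(1/4 : ℝ) * (n:ℝ)^2) := by
        refine int_gauss_mono (by norm_num) ?_
        rw [div_le_div_iff₀ (by norm_num) (by positivity)]
        nlinarith
      have := int_gauss_tsum_le (a := (1/4:ℝ)) (by norm_num)
      calc _ ≤ _ := hm
        _ ≤ 2 + 2/(1/4:ℝ) := this
        _ = 10 := by norm_num
    have hrpow : 1 / (4*π*β) ^ ((1:ℝ)/2) ≤ β ^ (-(1:ℝ)/2) := by
      have hb : β ^ ((1:ℝ)/2) ≤ (4*π*β) ^ ((1:ℝ)/2) := by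
        apply Real.rpow_le_rpow hβ.le ?_ (by norm_num)
        nlinarith
      have hbpos : 0 < β ^ ((1:ℝ)/2) := Real.rpow_pos_of_pos hβ _
      have : 1 / (4*π*β) ^ ((1:ℝ)/2) ≤ 1 / β ^ ((1:ℝ)/2) := by
        apply one_div_le_one_div_of_le hbpos hb
      calc _ ≤ 1 / β ^ ((1:ℝ)/2) := this
        _ = β ^ (-(1:ℝ)/2) := by
          rw [neg_div, Real.rpow_neg hβ.le, one_div]
    have hnn : (0:ℝ) ≤ ∑' n : ℤ, Real.exp (-(1/(4*β)) * (n:ℝ)^2) :=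
      tsum_nonneg (fun n => (Real.exp_pos _).le)
    rw [hL, hP, hR]
    calc 1 / (4*π*β) ^ ((1:ℝ)/2) * (∑' n : ℤ, Real.exp (-(1/(4*β)) * (n:ℝ)^2))
        ≤ β ^ (-(1:ℝ)/2) * 10 := by
          apply mul_le_mul hrpow hdual hnn
          positivity
      _ ≤ 10 * max 1 (β ^ (-(1:ℝ)/2)) := by
          rw [mul_comm]
          exact mul_le_mul_of_nonneg_left (le_max_right _ _) (by norm_num)

lemma gauss3_summable_eq {a : ℝ} (ha : 0 < a) :
    Summable (fun p : Fin 3 → ℤ => Real.exp (-a * (((p 0:ℝ))^2 + ((p 1:ℝ))^2 + ((p 2:ℝ))^2)))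
    ∧ (∑' p : Fin 3 → ℤ, Real.exp (-a * (((p 0:ℝ))^2 + ((p 1:ℝ))^2 + ((p 2:ℝ))^2)))
      = (∑' n : ℤ, Real.exp (-a * (n:ℝ)^2)) ^ 3 := by
  have hgs : Summable (fun n : ℤ => Real.exp (-a * (n:ℝ)^2)) := int_gauss_summable ha
  have hpos : (0:ℤ → ℝ) ≤ fun n : ℤ => Real.exp (-a * (n:ℝ)^2) :=
    fun n => (Real.exp_pos _).le
  have h2 : Summable (fun z : ℤ × ℤ => Real.exp (-a * (z.1:ℝ)^2) * Real.exp (-a * (z.2:ℝ)^2)) :=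
    hgs.mul_of_nonneg hgs hpos hpos
  have h2pos : (0: ℤ × ℤ → ℝ) ≤ fun z : ℤ × ℤ => Real.exp (-a * (z.1:ℝ)^2) * Real.exp (-a * (z.2:ℝ)^2) :=
    fun z => mul_nonneg (Real.exp_pos _).le (Real.exp_pos _).le
  have h3 : Summable (fun w : ℤ × ℤ × ℤ =>
      Real.exp (-a * (w.1:ℝ)^2) * (Real.exp (-a * (w.2.1:ℝ)^2) * Real.exp (-a * (w.2.2:ℝ)^2))) :=
    Summable.mul_of_nonneg (f := fun n : ℤ => Real.exp (-a * (n:ℝ)^2))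
      (g := fun z : ℤ × ℤ => Real.exp (-a * (z.1:ℝ)^2) * Real.exp (-a * (z.2:ℝ)^2))
      hgs h2 hpos h2pos
  have e2 : (∑' n : ℤ, Real.exp (-a * (n:ℝ)^2)) * (∑' n : ℤ, Real.exp (-a * (n:ℝ)^2))
      = ∑' z : ℤ × ℤ, Real.exp (-a * (z.1:ℝ)^2) * Real.exp (-a * (z.2:ℝ)^2) :=
    Summable.tsum_mul_tsum hgs hgs h2
  have e3 : (∑' n : ℤ, Real.exp (-a * (n:ℝ)^2))
        * (∑' z : ℤ × ℤ, Real.exp (-a * (z.1:ℝ)^2) * Real.exp (-a * (z.2:ℝ)^2))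
      = ∑' w : ℤ × ℤ × ℤ,
          Real.exp (-a * (w.1:ℝ)^2) * (Real.exp (-a * (w.2.1:ℝ)^2) * Real.exp (-a * (w.2.2:ℝ)^2)) :=
    Summable.tsum_mul_tsum (f := fun n : ℤ => Real.exp (-a * (n:ℝ)^2))
      (g := fun z : ℤ × ℤ => Real.exp (-a * (z.1:ℝ)^2) * Real.exp (-a * (z.2:ℝ)^2))
      hgs h2 h3
  let e : (Fin 3 → ℤ) ≃ ℤ × ℤ × ℤ :=
    { toFun := fun p => (p 0, p 1, p 2)
      invFun := fun w => ![w.1, w.2.1, w.2.2]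
      left_inv := by intro p; funext i; fin_cases i <;> rfl
      right_inv := by intro w; rfl }
  have hfe : ∀ p : Fin 3 → ℤ,
      Real.exp (-a * (((p 0:ℝ))^2 + ((p 1:ℝ))^2 + ((p 2:ℝ))^2))
      = (fun w : ℤ × ℤ × ℤ =>
          Real.exp (-a * (w.1:ℝ)^2) * (Real.exp (-a * (w.2.1:ℝ)^2) * Real.exp (-a * (w.2.2:ℝ)^2))) (e p) := by
    intro p
    simp only [e, Equiv.coe_fn_mk, ← Real.exp_add]
    congr 1
    show _ = -a * ((p 0:ℤ):ℝ)^2 + (-a * ((p 1:ℤ):ℝ)^2 + -a * ((p 2:ℤ):ℝ)^2)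
    ring
  constructor
  · exact ((e.summable_iff).mpr h3).congr (fun p => (hfe p).symm)
  · calc (∑' p : Fin 3 → ℤ, Real.exp (-a * (((p 0:ℝ))^2 + ((p 1:ℝ))^2 + ((p 2:ℝ))^2)))
        = ∑' p : Fin 3 → ℤ, (fun w : ℤ × ℤ × ℤ =>
            Real.exp (-a * (w.1:ℝ)^2) * (Real.exp (-a * (w.2.1:ℝ)^2) * Real.exp (-a * (w.2.2:ℝ)^2))) (e p) :=
          tsum_congr hfe
      _ = ∑' w : ℤ × ℤ × ℤ,
            Real.exp (-a * (w.1:ℝ)^2) * (Real.exp (-a * (w.2.1:ℝ)^2) * Real.exp (-a * (w.2.2:ℝ)^2)) :=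
          e.tsum_eq (fun w : ℤ × ℤ × ℤ =>
            Real.exp (-a * (w.1:ℝ)^2) * (Real.exp (-a * (w.2.1:ℝ)^2) * Real.exp (-a * (w.2.2:ℝ)^2)))
      _ = (∑' n : ℤ, Real.exp (-a * (n:ℝ)^2)) ^ 3 := by
          rw [← e3, ← e2]; ring

/-- if `μ₀ < 0` is the chemical potential of the ideal Bose gas on the
unit torus with `N` particles and `β ≥ c N^{−2/3}`, then `−βμ₀ ≤ C` for a constant `C`
depending only on `c`. -/
theorem stmt_17 (c : ℝ) (hc : 0 < c) :
    ∃ C > (0:ℝ), ∀ (β : ℝ) (N : ℕ) (μ₀ : ℝ), 0 < β → μ₀ < 0 →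
      Summable (fun p : Fin 3 → ℤ => (Real.exp (β * (lnorm3 p ^ 2 - μ₀)) - 1)⁻¹) →
      (N : ℝ) = (∑' p : Fin 3 → ℤ, (Real.exp (β * (lnorm3 p ^ 2 - μ₀)) - 1)⁻¹) →
      c * (N : ℝ) ^ (-(2:ℝ)/3) ≤ β →
      -(β * μ₀) ≤ C := by
  refine ⟨Real.log (1 + 1000 * max 1 (c ^ (-(3:ℝ)/2))), ?_, ?_⟩
  · apply Real.log_pos
    have h1 : (1:ℝ) ≤ max 1 (c ^ (-(3:ℝ)/2)) := le_max_left _ _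
    nlinarith
  intro β N μ₀ hβ hμ hsum hNeq hβc
  have hπ : 0 < π := Real.pi_pos
  have ha : 0 < 4*π^2*β := by positivity
  have hx : 0 < β * -μ₀ := mul_pos hβ (by linarith)
  have hE : 0 < Real.exp (β * -μ₀) - 1 := by
    have h1 : (1:ℝ) < Real.exp (β * -μ₀) := by
      rw [← Real.exp_zero]; exact Real.exp_lt_exp.mpr hx
    linarith
  have hlnsq : ∀ p : Fin 3 → ℤ,
      lnorm3 p ^ 2 = 4*π^2 * (((p 0:ℝ))^2 + ((p 1:ℝ))^2 + ((p 2:ℝ))^2) := by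
    intro p
    rw [lnorm3, Real.sq_sqrt (Finset.sum_nonneg fun i _ => sq_nonneg _), Fin.sum_univ_three]
    ring
  have hln_nonneg : ∀ p : Fin 3 → ℤ, 0 ≤ lnorm3 p ^ 2 := fun p => sq_nonneg _
  have hfpos : ∀ p : Fin 3 → ℤ, 0 < (Real.exp (β * (lnorm3 p ^ 2 - μ₀)) - 1)⁻¹ := by
    intro p
    have h0 : 0 < β * (lnorm3 p ^ 2 - μ₀) :=
      mul_pos hβ (by nlinarith [hln_nonneg p])
    have h1 : (1:ℝ) < Real.exp (β * (lnorm3 p ^ 2 - μ₀)) := by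
      rw [← Real.exp_zero]; exact Real.exp_lt_exp.mpr h0
    exact inv_pos.mpr (by linarith)
  -- N ≥ 1
  have hNr0 : (0:ℝ) < (N:ℝ) := by
    rw [hNeq]
    exact Summable.tsum_pos hsum (fun p => (hfpos p).le) 0 (hfpos 0)
  have hN1 : (1:ℝ) ≤ (N:ℝ) := by
    have : 0 < N := by exact_mod_cast hNr0
    exact_mod_cast this
  -- pointwise bound
  have hbound : ∀ p : Fin 3 → ℤ, (Real.exp (β * (lnorm3 p ^ 2 - μ₀)) - 1)⁻¹
      ≤ (Real.exp (β * -μ₀) - 1)⁻¹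
        * Real.exp (-(4*π^2*β) * (((p 0:ℝ))^2 + ((p 1:ℝ))^2 + ((p 2:ℝ))^2)) := by
    intro p
    have ht0 : 0 ≤ β * lnorm3 p ^ 2 := mul_nonneg hβ.le (hln_nonneg p)
    have hexpt : 1 ≤ Real.exp (β * lnorm3 p ^ 2) := Real.one_le_exp ht0
    have key : Real.exp (β * lnorm3 p ^ 2) * (Real.exp (β * -μ₀) - 1)
        ≤ Real.exp (β * (lnorm3 p ^ 2 - μ₀)) - 1 := by
      have harg : β * (lnorm3 p ^ 2 - μ₀) = β * lnorm3 p ^ 2 + β * -μ₀ := by ring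
      rw [harg, Real.exp_add]
      nlinarith [Real.exp_pos (β * -μ₀)]
    have hpos2 : 0 < Real.exp (β * lnorm3 p ^ 2) * (Real.exp (β * -μ₀) - 1) :=
      mul_pos (Real.exp_pos _) hE
    calc (Real.exp (β * (lnorm3 p ^ 2 - μ₀)) - 1)⁻¹
        ≤ (Real.exp (β * lnorm3 p ^ 2) * (Real.exp (β * -μ₀) - 1))⁻¹ :=
          inv_anti₀ hpos2 key
      _ = (Real.exp (β * -μ₀) - 1)⁻¹ * Real.exp (-(β * lnorm3 p ^ 2)) := by
          rw [Real.exp_neg, mul_inv]; ring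
      _ = (Real.exp (β * -μ₀) - 1)⁻¹
            * Real.exp (-(4*π^2*β) * (((p 0:ℝ))^2 + ((p 1:ℝ))^2 + ((p 2:ℝ))^2)) := by
          rw [hlnsq p]; congr 1; congr 1; ring
  have hgauss := gauss3_summable_eq ha
  have hsum2 : Summable (fun p : Fin 3 → ℤ => (Real.exp (β * -μ₀) - 1)⁻¹
      * Real.exp (-(4*π^2*β) * (((p 0:ℝ))^2 + ((p 1:ℝ))^2 + ((p 2:ℝ))^2))) :=
    hgauss.1.mul_left _
  have hNle : (N:ℝ) ≤ (Real.exp (β * -μ₀) - 1)⁻¹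
      * (∑' n : ℤ, Real.exp (-(4*π^2*β) * (n:ℝ)^2)) ^ 3 := by
    rw [hNeq]
    calc (∑' p : Fin 3 → ℤ, (Real.exp (β * (lnorm3 p ^ 2 - μ₀)) - 1)⁻¹)
        ≤ ∑' p : Fin 3 → ℤ, (Real.exp (β * -μ₀) - 1)⁻¹
            * Real.exp (-(4*π^2*β) * (((p 0:ℝ))^2 + ((p 1:ℝ))^2 + ((p 2:ℝ))^2)) :=
          Summable.tsum_le_tsum hbound hsum hsum2
      _ = (Real.exp (β * -μ₀) - 1)⁻¹
            * ∑' p : Fin 3 → ℤ, Real.exp (-(4*π^2*β) * (((p 0:ℝ))^2 + ((p 1:ℝ))^2 + ((p 2:ℝ))^2)) :=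
          tsum_mul_left
      _ = (Real.exp (β * -μ₀) - 1)⁻¹
            * (∑' n : ℤ, Real.exp (-(4*π^2*β) * (n:ℝ)^2)) ^ 3 := by rw [hgauss.2]
  -- theta bound cubed
  have hTnn : 0 ≤ (∑' n : ℤ, Real.exp (-(4*π^2*β) * (n:ℝ)^2)) :=
    tsum_nonneg (fun n => (Real.exp_pos _).le)
  have hT3 : (∑' n : ℤ, Real.exp (-(4*π^2*β) * (n:ℝ)^2)) ^ 3
      ≤ 1000 * max 1 (β ^ (-(3:ℝ)/2)) := by
    have h1 : (∑' n : ℤ, Real.exp (-(4*π^2*β) * (n:ℝ)^2)) ^ 3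
        ≤ (10 * max 1 (β ^ (-(1:ℝ)/2))) ^ 3 := pow_le_pow_left₀ hTnn (theta_beta hβ) 3
    have h2 : (max 1 (β ^ (-(1:ℝ)/2))) ^ 3 ≤ max 1 (β ^ (-(3:ℝ)/2)) := by
      rcases le_total 1 β with h | h
      · have hd : β ^ (-(1:ℝ)/2) ≤ 1 := Real.rpow_le_one_of_one_le_of_nonpos h (by norm_num)
        rw [max_eq_left hd, one_pow]
        exact le_max_left _ _
      · have hd : 1 ≤ β ^ (-(1:ℝ)/2) :=
          Real.one_le_rpow_of_pos_of_le_one_of_nonpos hβ h (by norm_num)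
        rw [max_eq_right hd]
        have h3 : (β ^ (-(1:ℝ)/2)) ^ (3:ℕ) = β ^ (-(3:ℝ)/2) := by
          rw [← Real.rpow_natCast (β ^ (-(1:ℝ)/2)) 3, ← Real.rpow_mul hβ.le]
          norm_num
        rw [h3]
        exact le_max_right _ _
    calc (∑' n : ℤ, Real.exp (-(4*π^2*β) * (n:ℝ)^2)) ^ 3
        ≤ (10 * max 1 (β ^ (-(1:ℝ)/2))) ^ 3 := h1
      _ = 1000 * (max 1 (β ^ (-(1:ℝ)/2))) ^ 3 := by ring
      _ ≤ 1000 * max 1 (β ^ (-(3:ℝ)/2)) := by nlinarith [h2]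
  -- β^{-3/2} ≤ c^{-3/2} N
  have hβ32 : β ^ (-(3:ℝ)/2) ≤ c ^ (-(3:ℝ)/2) * (N:ℝ) := by
    have h1 : β ^ (-(3:ℝ)/2) ≤ (c * (N:ℝ) ^ (-(2:ℝ)/3)) ^ (-(3:ℝ)/2) :=
      Real.rpow_le_rpow_of_nonpos (by positivity) hβc (by norm_num)
    have h2 : (c * (N:ℝ) ^ (-(2:ℝ)/3)) ^ (-(3:ℝ)/2) = c ^ (-(3:ℝ)/2) * (N:ℝ) := by
      rw [Real.mul_rpow hc.le (by positivity), ← Real.rpow_mul hNr0.le]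
      have h3 : (-(2:ℝ)/3) * (-(3:ℝ)/2) = 1 := by norm_num
      rw [h3, Real.rpow_one]
    exact h2 ▸ h1
  have hmax2 : max 1 (β ^ (-(3:ℝ)/2)) ≤ max 1 (c ^ (-(3:ℝ)/2)) * (N:ℝ) := by
    have hm1 : (1:ℝ) ≤ max 1 (c ^ (-(3:ℝ)/2)) := le_max_left _ _
    apply max_le
    · nlinarith
    · calc β ^ (-(3:ℝ)/2) ≤ c ^ (-(3:ℝ)/2) * (N:ℝ) := hβ32
        _ ≤ max 1 (c ^ (-(3:ℝ)/2)) * (N:ℝ) :=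
          mul_le_mul_of_nonneg_right (le_max_right _ _) hNr0.le
  -- combine
  have hchain : (N:ℝ) ≤ (Real.exp (β * -μ₀) - 1)⁻¹
      * ((1000 * max 1 (c ^ (-(3:ℝ)/2))) * (N:ℝ)) := by
    have hEi : 0 ≤ (Real.exp (β * -μ₀) - 1)⁻¹ := inv_nonneg.mpr hE.le
    calc (N:ℝ) ≤ (Real.exp (β * -μ₀) - 1)⁻¹
          * (∑' n : ℤ, Real.exp (-(4*π^2*β) * (n:ℝ)^2)) ^ 3 := hNle
      _ ≤ (Real.exp (β * -μ₀) - 1)⁻¹ * (1000 * max 1 (β ^ (-(3:ℝ)/2))) :=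
          mul_le_mul_of_nonneg_left hT3 hEi
      _ ≤ (Real.exp (β * -μ₀) - 1)⁻¹ * ((1000 * max 1 (c ^ (-(3:ℝ)/2))) * (N:ℝ)) := by
          apply mul_le_mul_of_nonneg_left _ hEi
          nlinarith
  have hED : Real.exp (β * -μ₀) - 1 ≤ 1000 * max 1 (c ^ (-(3:ℝ)/2)) := by
    have h1 := mul_le_mul_of_nonneg_left hchain hE.le
    rw [← mul_assoc, mul_inv_cancel₀ hE.ne', one_mul] at h1
    have h2 : (Real.exp (β * -μ₀) - 1) * (N:ℝ)
        ≤ (1000 * max 1 (c ^ (-(3:ℝ)/2))) * (N:ℝ) := by nlinarith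
    exact le_of_mul_le_mul_right (by linarith [h2]) hNr0
  have hfinal : Real.exp (β * -μ₀) ≤ 1 + 1000 * max 1 (c ^ (-(3:ℝ)/2)) := by linarith
  have hlog := Real.log_le_log (Real.exp_pos _) hfinal
  rw [Real.log_exp] at hlog
  linarith [hlog]
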